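/- The budget allocation procedure that sorts cluster sizes s_1 ≤ s_2 ≤ ... ≤ s_m in ascending order and iteratively assigns to each remaining cluster a_i = min(s_i, ⌊B/r⌋) where B is the remaining budget and r the number of remaining clusters, followed by distributing any leftover budget one unit at a time to clusters with a_i < s_i, produces an allocation satisfying: (1) 0 ≤ a_i ≤ s_i for all i, and (2) Σ a_i = min(k, Σ s_i), where k is the total budget. -/

import Mathlib

/-
Both phases keep every allocation below its cluster size, and phase 1 spends at most `k`,
so the leftover loop starts with budget `B = k - Σ aᵢ`. Each pass of the loop either hands
out at least one unit or finds every cluster full, so within `B` passes it distributes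
`min B (Σ (sᵢ - aᵢ))`, which brings the total to `min k (Σ sᵢ)`.
-/

/-- Phase 1 of the budget-allocation procedure: process clusters (sorted ascending by
size) in order, assigning to each the minimum of its size and the integer average
`⌊B/r⌋` of the remaining budget `B` over the `r` remaining clusters. -/
def allocPhase1 : List ℕ → ℕ → List ℕ
  | [], _ => []
  | s :: rest, B =>
    let q := B / (rest.length + 1)
    let a := min s q
    a :: allocPhase1 rest (B - a)

/-- One pass of the leftover-distribution loop: walk along the clusters, giving one
extra unit of budget to each cluster whose allocation is below its size, stopping
when the budget is exhausted.  Pairs are `(allocation, size)`. -/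
def allocPass : ℕ → List (ℕ × ℕ) → ℕ × List (ℕ × ℕ)
  | B, [] => (B, [])
  | 0, l => (0, l)
  | B + 1, (a, s) :: t =>
    if a < s then
      let r := allocPass B t
      (r.1, (a + 1, s) :: r.2)
    else
      let r := allocPass (B + 1) t
      (r.1, (a, s) :: r.2)

/-- Repeat passes until the budget is exhausted or no cluster has remaining capacity
(fuel-bounded; fuel equal to the budget suffices). -/
def allocLoop : ℕ → ℕ → List (ℕ × ℕ) → List (ℕ × ℕ)
  | 0, _, l => l
  | fuel + 1, B, l =>
    if B = 0 then l
    else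
      let r := allocPass B l
      if r.1 = B then r.2 else allocLoop fuel r.1 r.2

/-- The full budget-allocation procedure on a sorted size list with total budget `k`. -/
def alloc (s : List ℕ) (k : ℕ) : List ℕ :=
  let a1 := allocPhase1 s k
  let B := k - a1.sum
  (allocLoop B B (a1.zip s)).map Prod.fst

section Leftover

variable (B : ℕ) (l : List (ℕ × ℕ))

theorem allocPass_fst_le : (allocPass B l).1 ≤ B := by
  induction l generalizing B with
  | nil => simp [allocPass]
  | cons p t ih =>
    obtain ⟨a, s⟩ := p
    cases B with
    | zero => simp [allocPass]
    | succ B =>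
      simp only [allocPass]
      split
      · exact (ih B).trans B.le_succ
      · exact ih (B + 1)

theorem allocPass_fst_add_sum :
    (allocPass B l).1 + ((allocPass B l).2.map Prod.fst).sum = B + (l.map Prod.fst).sum := by
  induction l generalizing B with
  | nil => simp [allocPass]
  | cons p t ih =>
    obtain ⟨a, s⟩ := p
    cases B with
    | zero => simp [allocPass]
    | succ B =>
      simp only [allocPass]
      split
      · have := ih B
        simp only [List.map_cons, List.sum_cons]
        omega
      · have := ih (B + 1)
        simp only [List.map_cons, List.sum_cons]
        omega

theorem map_snd_allocPass : (allocPass B l).2.map Prod.snd = l.map Prod.snd := by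
  induction l generalizing B with
  | nil => simp [allocPass]
  | cons p t ih =>
    obtain ⟨a, s⟩ := p
    cases B with
    | zero => simp [allocPass]
    | succ B =>
      simp only [allocPass]
      split <;> simp [ih]

theorem allocPass_fst_le_snd (h : ∀ p ∈ l, p.1 ≤ p.2) :
    ∀ p ∈ (allocPass B l).2, p.1 ≤ p.2 := by
  induction l generalizing B with
  | nil => simp [allocPass]
  | cons p t ih =>
    obtain ⟨a, s⟩ := p
    have ht : ∀ p ∈ t, p.1 ≤ p.2 := fun p hp => h p (List.mem_cons_of_mem _ hp)
    cases B with
    | zero => simpa [allocPass] using h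
    | succ B =>
      simp only [allocPass]
      split
      case isTrue has =>
        rintro q (_ | ⟨_, hq⟩)
        · exact has
        · exact ih B ht q hq
      case isFalse =>
        rintro q (_ | ⟨_, hq⟩)
        · exact h _ List.mem_cons_self
        · exact ih (B + 1) ht q hq

theorem allocPass_snd_le_fst (hB : B ≠ 0) (h : (allocPass B l).1 = B) :
    ∀ p ∈ (allocPass B l).2, p.2 ≤ p.1 := by
  induction l generalizing B with
  | nil => simp [allocPass]
  | cons p t ih =>
    obtain ⟨a, s⟩ := p
    obtain _ | B := B
    · exact absurd rfl hB
    by_cases has : a < s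
    · simp only [allocPass, if_pos has] at h
      have := allocPass_fst_le B t
      omega
    · simp only [allocPass, if_neg has] at h ⊢
      rintro q (_ | ⟨_, hq⟩)
      · omega
      · exact ih (B + 1) B.succ_ne_zero h q hq

theorem map_snd_allocLoop (fuel : ℕ) :
    (allocLoop fuel B l).map Prod.snd = l.map Prod.snd := by
  induction fuel generalizing B l with
  | zero => rfl
  | succ fuel ih =>
    simp only [allocLoop]
    split_ifs
    · rfl
    · exact map_snd_allocPass B l
    · exact (ih _ _).trans (map_snd_allocPass B l)

theorem allocLoop_fst_le_snd (fuel : ℕ) (h : ∀ p ∈ l, p.1 ≤ p.2) :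
    ∀ p ∈ allocLoop fuel B l, p.1 ≤ p.2 := by
  induction fuel generalizing B l with
  | zero => exact h
  | succ fuel ih =>
    simp only [allocLoop]
    split_ifs
    · exact h
    · exact allocPass_fst_le_snd B l h
    · exact ih _ _ (allocPass_fst_le_snd B l h)

theorem sum_map_fst_allocLoop (fuel : ℕ) (hB : B ≤ fuel) (h : ∀ p ∈ l, p.1 ≤ p.2) :
    ((allocLoop fuel B l).map Prod.fst).sum
      = min (B + (l.map Prod.fst).sum) (l.map Prod.snd).sum := by
  have hle : (l.map Prod.fst).sum ≤ (l.map Prod.snd).sum := List.sum_le_sum h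
  induction fuel generalizing B l with
  | zero => simp only [allocLoop]; omega
  | succ fuel ih =>
    simp only [allocLoop]
    have hpass := allocPass_fst_add_sum B l
    have hsnd := map_snd_allocPass B l
    split_ifs with hB0 hfull
    · omega
    · have hfst : (allocPass B l).2.map Prod.fst = (allocPass B l).2.map Prod.snd :=
        List.map_congr_left fun p hp =>
          le_antisymm (allocPass_fst_le_snd B l h p hp) (allocPass_snd_le_fst B l hB0 hfull p hp)
      rw [hfst, hsnd] at hpass ⊢
      omega
    · have hlt : (allocPass B l).1 < B := lt_of_le_of_ne (allocPass_fst_le B l) hfull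
      have h' := allocPass_fst_le_snd B l h
      rw [ih _ _ (by omega) h' (List.sum_le_sum h'), hpass, hsnd]

end Leftover

theorem allocPhase1_forall₂_le (s : List ℕ) (B : ℕ) :
    List.Forall₂ (· ≤ ·) (allocPhase1 s B) s := by
  induction s generalizing B with
  | nil => exact List.Forall₂.nil
  | cons x t ih => exact List.Forall₂.cons (min_le_left _ _) (ih _)

theorem allocPhase1_sum_le (s : List ℕ) (B : ℕ) : (allocPhase1 s B).sum ≤ B := by
  induction s generalizing B with
  | nil => simp [allocPhase1]
  | cons x t ih =>
    simp only [allocPhase1, List.sum_cons]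
    have hx : min x (B / (t.length + 1)) ≤ B := (min_le_right _ _).trans (Nat.div_le_self _ _)
    have := ih (B - min x (B / (t.length + 1)))
    omega

theorem alloc_valid_general (s : List ℕ) (k : ℕ) :
    (alloc s k).length = s.length ∧
    (∀ (i : ℕ) (hi : i < (alloc s k).length) (hi' : i < s.length),
      (alloc s k).get ⟨i, hi⟩ ≤ s.get ⟨i, hi'⟩) ∧
    (alloc s k).sum = min k s.sum := by
  set a₁ := allocPhase1 s k
  have ha₁ : List.Forall₂ (· ≤ ·) a₁ s := allocPhase1_forall₂_le s k
  have hk : k - a₁.sum + a₁.sum = k := Nat.sub_add_cancel (allocPhase1_sum_le s k)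
  have hfst : (a₁.zip s).map Prod.fst = a₁ := List.map_fst_zip ha₁.length_eq.le
  have hsnd : (a₁.zip s).map Prod.snd = s := List.map_snd_zip ha₁.length_eq.ge
  have hzip : ∀ p ∈ a₁.zip s, p.1 ≤ p.2 := fun _ hp => (List.forall₂_iff_zip.1 ha₁).2 hp
  set l := allocLoop (k - a₁.sum) (k - a₁.sum) (a₁.zip s)
  have hl : ∀ p ∈ l, p.1 ≤ p.2 := allocLoop_fst_le_snd _ _ _ hzip
  have hls : l.map Prod.snd = s := (map_snd_allocLoop _ _ _).trans hsnd
  have hle : List.Forall₂ (· ≤ ·) (alloc s k) s := by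
    change List.Forall₂ _ (l.map Prod.fst) s
    rw [← hls, List.forall₂_map_left_iff, List.forall₂_map_right_iff]
    exact List.forall₂_same.2 hl
  refine ⟨hle.length_eq, (List.forall₂_iff_get.1 hle).2, ?_⟩
  change (l.map Prod.fst).sum = _
  rw [sum_map_fst_allocLoop _ _ _ le_rfl hzip, hfst, hsnd, hk]

/-- The budget-allocation procedure produces an allocation list of the same length as
the size list satisfying `0 ≤ aᵢ ≤ sᵢ` and `Σ aᵢ = min(k, Σ sᵢ)`. -/
theorem alloc_valid (s : List ℕ) (k : ℕ)
    (hsorted : s.Pairwise (· ≤ ·)) (hpos : ∀ x ∈ s, 0 < x) :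
    (alloc s k).length = s.length ∧
    (∀ (i : ℕ) (hi : i < (alloc s k).length) (hi' : i < s.length),
      (alloc s k).get ⟨i, hi⟩ ≤ s.get ⟨i, hi'⟩) ∧
    (alloc s k).sum = min k s.sum :=
  alloc_valid_general s k
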